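/- For every integer j with 1 ≤ j ≤ C, every f ∈ ℂ[X,Y] satisfying r·f = ζ^j f or r·f = ζ^{−j} f belongs to the ideal of ℂ[X,Y] generated by X^j and Y^j. -/

import Mathlib

open MvPolynomial

/-!
`rAct ζ` scales the monomial `XᵃYᵇ` by `ζ ^ (a - b)`, so every monomial of an eigenvector with
eigenvalue `ζ ^ (±j)` has `a - b ≡ ±j [ZMOD n]`. If `a, b < j` then `|a - b ∓ j| < 2j < n`, forcing
`a - b = ±j`, which is absurd; hence every monomial is divisible by `Xʲ` or `Yʲ`.
-/

noncomputable section

/-- The action of the generator `r` of the dihedral group `D_n` on `ℂ[X,Y]`: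
the `ℂ`-algebra automorphism determined by `X ↦ ζ·X`, `Y ↦ ζ⁻¹·Y`. -/
def rAct (ζ : ℂ) : MvPolynomial (Fin 2) ℂ →ₐ[ℂ] MvPolynomial (Fin 2) ℂ :=
  aeval ![ζ • X 0, ζ⁻¹ • X 1]

theorem IsPrimitiveRoot.eq_of_zpow_eq_zpow_of_abs_sub_lt {G₀ : Type*} [CommGroupWithZero G₀]
    {ζ : G₀} {n : ℕ} (hζ : IsPrimitiveRoot ζ n) {k m : ℤ} (hkm : |k - m| < n)
    (h : ζ ^ k = ζ ^ m) : k = m := by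
  have hn : n ≠ 0 := by
    rintro rfl
    exact (abs_nonneg _).not_gt (by exact_mod_cast hkm)
  have hζ0 : ζ ≠ 0 := hζ.ne_zero hn
  have hdvd : (n : ℤ) ∣ k - m := by
    rw [← hζ.zpow_eq_one_iff_dvd, zpow_sub₀ hζ0, h, div_self (zpow_ne_zero _ hζ0)]
  exact sub_eq_zero.mp (Int.eq_zero_of_abs_lt_dvd hdvd hkm)

theorem IsPrimitiveRoot.zpow_ne_zpow_of_abs_lt {G₀ : Type*} [CommGroupWithZero G₀]
    {ζ : G₀} {n : ℕ} (hζ : IsPrimitiveRoot ζ n) {k m : ℤ} (hk : 2 * |k| < n) (hm : |m| < |k|) :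
    ζ ^ m ≠ ζ ^ k := fun h ↦ by
  have hmk : |m - k| < n := (abs_sub m k).trans_lt (by linarith)
  exact hm.ne (congrArg abs (hζ.eq_of_zpow_eq_zpow_of_abs_sub_lt hmk h))

theorem MvPolynomial.mem_ideal_span_X_pow_pair {σ R : Type*} [CommSemiring R]
    {f : MvPolynomial σ R} (i i' : σ) (j : ℕ) :
    f ∈ Ideal.span {X i ^ j, X i' ^ j} ↔ ∀ d ∈ f.support, j ≤ d i ∨ j ≤ d i' := by
  simp only [X_pow_eq_monomial]
  rw [← Set.image_pair (fun s ↦ monomial s (1 : R)), mem_ideal_span_monomial_image]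
  simp [Finsupp.single_le_iff]

theorem rAct_monomial (ζ : ℂ) (d : Fin 2 →₀ ℕ) (c : ℂ) :
    rAct ζ (monomial d c) = C (ζ ^ d 0 * ζ⁻¹ ^ d 1) * monomial d c := by
  rw [rAct, aeval_monomial, monomial_eq, Finsupp.prod_fintype _ _ (fun _ ↦ pow_zero _),
    Finsupp.prod_fintype _ _ (fun _ ↦ pow_zero _)]
  simp only [Fin.prod_univ_two, Matrix.cons_val_zero, Matrix.cons_val_one, smul_eq_C_mul,
    algebraMap_eq, map_mul, C_pow]
  ring

theorem coeff_rAct {ζ : ℂ} (hζ : ζ ≠ 0) (f : MvPolynomial (Fin 2) ℂ) (d : Fin 2 →₀ ℕ) :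
    coeff d (rAct ζ f) = ζ ^ ((d 0 : ℤ) - d 1) * coeff d f := by
  induction f using MvPolynomial.induction_on' with
  | monomial d' c =>
    rw [rAct_monomial, coeff_C_mul, coeff_monomial, zpow_sub₀ hζ, zpow_natCast, zpow_natCast,
      div_eq_mul_inv, inv_pow]
    split_ifs with h
    · rw [h]
    · rw [mul_zero, mul_zero]
  | add p q hp hq => rw [map_add, coeff_add, coeff_add, hp, hq, mul_add]

theorem zpow_eq_of_rAct_eq_smul {ζ c : ℂ} (hζ : ζ ≠ 0) {f : MvPolynomial (Fin 2) ℂ}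
    (hf : rAct ζ f = c • f) {d : Fin 2 →₀ ℕ} (hd : d ∈ f.support) :
    ζ ^ ((d 0 : ℤ) - d 1) = c := by
  have := congrArg (coeff d) hf
  rw [coeff_rAct hζ, coeff_smul, smul_eq_mul] at this
  exact mul_right_cancel₀ (mem_support_iff.mp hd) this

theorem stmt_12_general (n : ℕ) (ζ : ℂ) (hζ : IsPrimitiveRoot ζ n)
    (j : ℕ) (hjC : j ≤ (n - 1) / 2)
    (f : MvPolynomial (Fin 2) ℂ)
    (hf : rAct ζ f = (ζ ^ (j : ℤ)) • f ∨ rAct ζ f = (ζ ^ (-(j : ℤ))) • f) :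
    f ∈ Ideal.span {(X 0 : MvPolynomial (Fin 2) ℂ) ^ j, (X 1 : MvPolynomial (Fin 2) ℂ) ^ j} := by
  obtain ⟨k, hk, hfk⟩ : ∃ k : ℤ, |k| = j ∧ rAct ζ f = ζ ^ k • f :=
    hf.elim (fun h ↦ ⟨j, by simp, h⟩) (fun h ↦ ⟨-j, by simp, h⟩)
  rw [mem_ideal_span_X_pow_pair]
  intro d hd
  by_contra! hdj
  have hζ0 : ζ ≠ 0 := hζ.ne_zero (by omega)
  refine hζ.zpow_ne_zpow_of_abs_lt (by omega) ?_ (zpow_eq_of_rAct_eq_smul hζ0 hfk hd)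
  rw [hk, abs_lt]
  omega

/-- Let `n ≥ 3` be odd, `ζ` a primitive `n`-th root of unity, `C = (n-1)/2`, and let `W = D_n`
act on `ℂ[X,Y]` by `r·X = ζX`, `r·Y = ζ⁻¹Y`, `s·X = Y`, `s·Y = X`.  For every integer `j`
with `1 ≤ j ≤ C`, every `f ∈ ℂ[X,Y]` satisfying `r·f = ζʲ·f` or `r·f = ζ⁻ʲ·f` belongs
to the ideal generated by `Xʲ` and `Yʲ`. -/
theorem stmt_12 (n : ℕ) (hn : 3 ≤ n) (hodd : Odd n) (ζ : ℂ) (hζ : IsPrimitiveRoot ζ n)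
    (j : ℕ) (hj : 1 ≤ j) (hjC : j ≤ (n - 1) / 2)
    (f : MvPolynomial (Fin 2) ℂ)
    (hf : rAct ζ f = (ζ ^ (j : ℤ)) • f ∨ rAct ζ f = (ζ ^ (-(j : ℤ))) • f) :
    f ∈ Ideal.span {(X 0 : MvPolynomial (Fin 2) ℂ) ^ j, (X 1 : MvPolynomial (Fin 2) ℂ) ^ j} :=
  stmt_12_general n ζ hζ j hjC f hf

end
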